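/- Let X = {(x,y,z) ∈ ℂ³ : x² + y² + z² = z}, φ(x,y,z) = ((1−2z)x, (1−3z)y, (1−z)z), and W = φ(X ∩ {z = 1/4}). Then the preimage φ⁻¹(W) equals (X ∩ {z = 1/4}) ∪ {(√3/4, 0, 3/4), (−√3/4, 0, 3/4)}. -/
import Mathlib


/-- The sphere `x²+y²+z² = z` in `ℂ³`. -/
def sphereX : Set (ℂ × ℂ × ℂ) :=
  {p | p.1 ^ 2 + p.2.1 ^ 2 + p.2.2 ^ 2 = p.2.2}

/-- The map `φ(x,y,z) = ((1−2z)x, (1−3z)y, (1−z)z)`. -/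
def phiMap : ℂ × ℂ × ℂ → ℂ × ℂ × ℂ :=
  fun p => ((1 - 2 * p.2.2) * p.1, (1 - 3 * p.2.2) * p.2.1, (1 - p.2.2) * p.2.2)

/-- With `W = φ(X ∩ {z = 1/4})`, the preimage of `W` in `X` is the circle
`X ∩ {z = 1/4}` together with the two points `(±√3/4, 0, 3/4)`. -/
theorem preimage_of_W :
    sphereX ∩ phiMap ⁻¹' (phiMap '' (sphereX ∩ {p | p.2.2 = 1 / 4})) =
      (sphereX ∩ {p | p.2.2 = 1 / 4}) ∪
        {((Real.sqrt 3 : ℂ) / 4, 0, 3 / 4), (-((Real.sqrt 3 : ℂ) / 4), 0, 3 / 4)} := by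
  have hs : ((Real.sqrt 3 : ℝ) : ℂ) ^ 2 = 3 := by
    norm_cast
    exact Real.sq_sqrt (by norm_num)
  ext ⟨x, y, z⟩
  simp only [sphereX, phiMap, Set.mem_inter_iff, Set.mem_preimage, Set.mem_image,
    Set.mem_setOf_eq, Set.mem_union, Set.mem_insert_iff, Set.mem_singleton_iff,
    Prod.mk.injEq, Prod.ext_iff]
  constructor
  · rintro ⟨hX, ⟨⟨a, b, c⟩, ⟨hS, hc⟩, h1, h2, h3⟩⟩
    simp only at hS hc h1 h2 h3
    subst hc
    have hz : z = 1 / 4 ∨ z = 3 / 4 := by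
      have hfac : (z - 1 / 4) * (z - 3 / 4) = 0 := by linear_combination h3
      rcases mul_eq_zero.mp hfac with h | h
      · left; linear_combination h
      · right; linear_combination h
    rcases hz with hz | hz
    · exact Or.inl ⟨hX, hz⟩
    · subst hz
      have ha : a = -x := by linear_combination 2 * h1
      have hb : b = -5 * y := by linear_combination 4 * h2
      rw [ha, hb] at hS
      have hy : y = 0 := by
        have hy2 : y ^ 2 = 0 := by linear_combination (1 / 24) * hS - (1 / 24) * hX
        exact pow_eq_zero_iff (by norm_num) |>.mp hy2
      subst hy
      have hfac : (x - (Real.sqrt 3 : ℂ) / 4) * (x + (Real.sqrt 3 : ℂ) / 4) = 0 := by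
        linear_combination hX - (1 / 16) * hs
      rcases mul_eq_zero.mp hfac with h | h
      · exact Or.inr (Or.inl ⟨by linear_combination h, rfl, rfl⟩)
      · exact Or.inr (Or.inr ⟨by linear_combination h, rfl, rfl⟩)
  · rintro (⟨hX, hz⟩ | ⟨h1, h2, h3⟩ | ⟨h1, h2, h3⟩)
    · exact ⟨hX, ⟨(x, y, z), ⟨hX, hz⟩, rfl, rfl, rfl⟩⟩
    · subst h1; subst h2; subst h3
      refine ⟨by linear_combination (1 / 16) * hs,
        ⟨(-((Real.sqrt 3 : ℂ) / 4), 0, 1 / 4),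
          ⟨by simpa using by linear_combination (1 / 16) * hs, rfl⟩, ?_, ?_, ?_⟩⟩
      · simp; ring
      · simp
      · simp; ring
    · subst h1; subst h2; subst h3
      refine ⟨by linear_combination (1 / 16) * hs,
        ⟨(((Real.sqrt 3 : ℂ) / 4), 0, 1 / 4),
          ⟨by simpa using by linear_combination (1 / 16) * hs, rfl⟩, ?_, ?_, ?_⟩⟩
      · simp; ring
      · simp
      · simp; ring
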